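/- Let I be a finite index set, and suppose all observed values are strictly positive (i.e., data distributions are supported on functions f : I → ℝ with f(s) > 0 for all s). Fix a distribution p_I on nonempty subsets T ⊆ I. Two distributions p and p' on ℝ^I induce the same distribution of the masked vector m(x_T, T) (with T ~ p_I and x_T the restriction of f ~ p resp. f ~ p' to T) if and only if for every T with p_I(T) > 0, the marginal distributions of f restricted to T under p and p' coincide. -/
import Mathlib


open Finset

/-- Masked vector: equals `f` on `T` and `0` off `T`. -/
def maskF {I : Type*} [DecidableEq I] (f : I → ℝ) (T : Finset I) : I → ℝ :=
  fun s => if s ∈ T then f s else 0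

/-- Restriction of `f : I → ℝ` to a subset `T`. -/
def restrictF {I : Type*} (f : I → ℝ) (T : Finset I) : T → ℝ :=
  fun s => f s

/-- Extension by zero of a function on a subset. -/
def extendF {I : Type*} [DecidableEq I] (T : Finset I) (g : T → ℝ) : I → ℝ :=
  fun s => if h : s ∈ T then g ⟨s, h⟩ else 0

lemma maskF_eq_extendF_restrictF {I : Type*} [DecidableEq I] (f : I → ℝ) (T : Finset I) :
    maskF f T = extendF T (restrictF f T) := by
  funext s
  simp only [maskF, extendF, restrictF]
  split_ifs <;> rfl

/-- For fixed `T`, `maskF f T = extendF T g` iff `restrictF f T = g`. -/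
lemma maskF_eq_extend_iff {I : Type*} [DecidableEq I] (f : I → ℝ) (T : Finset I) (g : T → ℝ) :
    extendF T g = maskF f T ↔ g = restrictF f T := by
  constructor
  · intro h
    funext s
    have := congrFun h s.1
    simpa [extendF, maskF, restrictF, s.2] using this
  · intro h
    funext s
    by_cases hs : s ∈ T
    · have := congrFun h ⟨s, hs⟩
      simpa [extendF, maskF, restrictF, hs] using this
    · simp [extendF, maskF, hs]

/-- Marginal at `g` equals masked distribution at the zero-extension of `g`. -/
lemma map_mask_extend_eq {I : Type*} [DecidableEq I] (p : PMF (I → ℝ)) (T : Finset I)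
    (g : T → ℝ) :
    (p.map fun f => maskF f T) (extendF T g) = (p.map fun f => restrictF f T) g := by
  rw [PMF.map_apply, PMF.map_apply]
  refine tsum_congr fun f => ?_
  by_cases h : extendF T g = maskF f T
  · rw [if_pos h, if_pos ((maskF_eq_extend_iff f T g).mp h)]
  · rw [if_neg h, if_neg (fun hg => h ((maskF_eq_extend_iff f T g).mpr hg))]

/-- If `g` fails positivity somewhere, the marginal of a positively-supported
distribution vanishes at `g`. -/
lemma map_restrict_eq_zero {I : Type*} (p : PMF (I → ℝ))
    (hp : ∀ f ∈ p.support, ∀ s, 0 < f s) (T : Finset I) (g : T → ℝ)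
    (hg : ¬ ∀ s : T, 0 < g s) :
    (p.map fun f => restrictF f T) g = 0 := by
  rw [PMF.map_apply, ENNReal.tsum_eq_zero]
  intro f
  split_ifs with h
  · by_contra hf
    exact hg fun s => h ▸ hp f hf s.1
  · rfl

/-- The mixture evaluated at the extension of an everywhere-positive `g`
isolates the `T`-term. -/
lemma bind_mask_extend {I : Type*} [DecidableEq I] (p : PMF (I → ℝ)) (pI : PMF (Finset I))
    (hp : ∀ f ∈ p.support, ∀ s, 0 < f s) (T : Finset I) (g : T → ℝ) (hg : ∀ s : T, 0 < g s) :
    (pI.bind fun T' => p.map fun f => maskF f T') (extendF T g) =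
      pI T * (p.map fun f => maskF f T) (extendF T g) := by
  rw [PMF.bind_apply]
  refine tsum_eq_single T fun T' hT' => ?_
  refine mul_eq_zero_of_right _ ?_
  rw [PMF.map_apply, ENNReal.tsum_eq_zero]
  intro f
  split_ifs with h
  · by_contra hf
    apply hT'
    have hpos := hp f hf
    ext s
    constructor
    · intro hs
      have hc := congrFun h s
      simp only [maskF, if_pos hs] at hc
      by_contra hsT
      simp only [extendF, dif_neg hsT] at hc
      exact (hpos s).ne' hc.symm
    · intro hs
      have hc := congrFun h s
      simp only [extendF, dif_pos hs] at hc
      by_contra hsT'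
      simp only [maskF, if_neg hsT'] at hc
      exact (hg ⟨s, hs⟩).ne' hc
  · rfl

/-- Two distributions supported on strictly positive functions induce the same
distribution of the masked vector iff all their marginals on index sets with
positive probability coincide. -/
theorem masked_distribution_eq_iff_marginals
    {I : Type*} [Fintype I] [DecidableEq I]
    (p p' : PMF (I → ℝ)) (pI : PMF (Finset I))
    (hTne : ∀ T ∈ pI.support, T.Nonempty)
    (hp : ∀ f ∈ p.support, ∀ s, 0 < f s)
    (hp' : ∀ f ∈ p'.support, ∀ s, 0 < f s) :
    (pI.bind fun T => p.map fun f => maskF f T) =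
      (pI.bind fun T => p'.map fun f => maskF f T) ↔
    ∀ T : Finset I, 0 < pI T →
      p.map (fun f => restrictF f T) = p'.map (fun f => restrictF f T) := by
  constructor
  · intro h T hT
    ext g
    by_cases hg : ∀ s : T, 0 < g s
    · have h1 := congrFun (congrArg DFunLike.coe h) (extendF T g)
      rw [bind_mask_extend p pI hp T g hg, bind_mask_extend p' pI hp' T g hg] at h1
      have h2 := (ENNReal.mul_right_inj hT.ne' (PMF.apply_ne_top pI T)).mp h1
      rw [map_mask_extend_eq, map_mask_extend_eq] at h2
      exact h2
    · rw [map_restrict_eq_zero p hp T g hg, map_restrict_eq_zero p' hp' T g hg]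
  · intro h
    ext x
    rw [PMF.bind_apply, PMF.bind_apply]
    refine tsum_congr fun T => ?_
    rcases eq_or_ne (pI T) 0 with h0 | h0
    · rw [h0, zero_mul, zero_mul]
    congr 1
    have hmap : (p.map fun f => maskF f T) = (p'.map fun f => maskF f T) := by
      have : ∀ q : PMF (I → ℝ),
          (q.map fun f => maskF f T) = (q.map fun f => restrictF f T).map (extendF T) := by
        intro q
        rw [PMF.map_comp]
        exact congrFun (congrArg PMF.map
          (funext fun f => maskF_eq_extendF_restrictF f T)) q
      rw [this p, this p', h T (pos_iff_ne_zero.mpr h0)]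
    rw [hmap]
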